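/- arXiv:1601.04737 — 3 statements merged into one kernel-verified Lean document; each statement's English description precedes it below -/
import Mathlib

section
/- Let β ∈ (0,1), 0 < ε < 1, and x ∈ ℝ^p. Let S be a finite sample of indices from {1,…,n} such that the sub-sampled Hessian H(x) satisfies λ_min(H(x)) ≥ (1−ε)γ, and set p = −H(x)⁻¹ ∇F(x). Then: (a) every step size α with 0 < α ≤ 2(1−β)(1−ε)/κ satisfies the Armijo condition F(x+αp) ≤ F(x) + αβ pᵀ∇F(x); and (b) for any α > 0 satisfying this Armijo condition, F(x+αp) − F(x*) ≤ (1 − 2αβ/κ̃)(F(x) − F(x*)). -/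
/-!
Along a line `t ↦ x + t • v` the Hessian bounds `γ I ⪯ ∇²F ⪯ K I` give quadratic upper and lower
Taylor bounds for `F`. Since `H p = -∇F(x)`, the slope `⟪p, ∇F(x)⟫ = -⟪H p, p⟫` is at most
`-(1 - ε) γ ‖p‖²`, and the upper Taylor bound turns this into the Armijo condition for
`α ≤ 2 (1 - β)(1 - ε) / κ`.

For the decrease, the lower Taylor bound gives the Polyak–Łojasiewicz inequality
`2 γ (F x - F x*) ≤ ‖∇F(x)‖²`. On the other side `H` is a positive operator with `H ⪯ K̂ I`,
because the sampled constants `K_j` average to at most `K̂` (the `|S|` largest `K_i` dominate any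
`|S|` distinct ones). Cauchy–Schwarz for the form `⟪H ·, ·⟫` then gives
`‖∇F(x)‖² = ‖H p‖² ≤ K̂ ⟪H p, p⟫ = -K̂ ⟪p, ∇F(x)⟫`, and the Armijo condition converts this into
the contraction factor `1 - 2 α β / κ̃`.
-/

open scoped RealInnerProductSpace

/-- The Hessian of `F : ℝ^d → ℝ` at `x`, as a continuous linear map,
obtained as the (Fréchet) derivative of the gradient. -/
noncomputable def hess {d : ℕ} (F : EuclideanSpace ℝ (Fin d) → ℝ)
    (x : EuclideanSpace ℝ (Fin d)) :
    EuclideanSpace ℝ (Fin d) →L[ℝ] EuclideanSpace ℝ (Fin d) :=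
  fderiv ℝ (gradient F) x

namespace Finset

variable {ι M : Type*} [AddCommMonoid M] [LinearOrder M] [IsOrderedAddMonoid M] {f : ι → M}

theorem sum_le_sum_of_card_eq_of_forall_le {A B : Finset ι} (hAB : #A = #B)
    (h : ∀ i ∈ A, ∀ j ∈ B, f i ≤ f j) : ∑ i ∈ A, f i ≤ ∑ j ∈ B, f j := by
  rcases B.eq_empty_or_nonempty with rfl | hB
  · simp [card_eq_zero.1 hAB]
  obtain ⟨j₀, hj₀, hmin⟩ := B.exists_min_image f hB
  calc ∑ i ∈ A, f i ≤ #A • f j₀ := sum_le_card_nsmul _ _ _ fun i hi ↦ h i hi j₀ hj₀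
    _ = #B • f j₀ := by rw [hAB]
    _ ≤ ∑ j ∈ B, f j := card_nsmul_le_sum _ _ _ hmin

theorem sum_le_sum_of_card_eq_of_upper [DecidableEq ι] {T Q : Finset ι} (hTQ : #T = #Q)
    (hQ : ∀ i ∈ Q, ∀ j ∉ Q, f j ≤ f i) : ∑ i ∈ T, f i ≤ ∑ i ∈ Q, f i := by
  rw [← sum_inter_add_sum_sdiff T Q, ← sum_inter_add_sum_sdiff Q T, inter_comm Q T]
  gcongr 1
  exact sum_le_sum_of_card_eq_of_forall_le (card_sdiff_comm hTQ)
    fun i hi j hj ↦ hQ j (mem_sdiff.1 hj).1 i (mem_sdiff.1 hi).2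

end Finset

theorem le_add_deriv_add_of_hasDerivAt_of_le {φ φ' φ'' : ℝ → ℝ} {C : ℝ}
    (hφ : ∀ t, HasDerivAt φ (φ' t) t) (hφ' : ∀ t, HasDerivAt φ' (φ'' t) t)
    (hC : ∀ t, φ'' t ≤ C) : φ 1 ≤ φ 0 + φ' 0 + C / 2 := by
  have hslope : ∀ t, 0 ≤ t → φ' t ≤ φ' 0 + C * t := by
    have hanti : Antitone fun t ↦ φ' t - C * t :=
      antitone_of_hasDerivAt_nonpos (f' := fun t ↦ φ'' t - C)
        (fun t ↦ ((hφ' t).sub ((hasDerivAt_id t).const_mul C)).congr_deriv (by simp))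
        fun t ↦ sub_nonpos.2 (hC t)
    intro t ht
    have := hanti ht
    simp only [mul_zero, sub_zero] at this
    linarith
  have hχ : ∀ t, HasDerivAt (fun t ↦ φ t - φ' 0 * t - C / 2 * t ^ 2)
      (φ' t - φ' 0 - C * t) t := fun t ↦
    (((hφ t).sub ((hasDerivAt_id t).const_mul (φ' 0))).sub
      ((hasDerivAt_pow 2 t).const_mul (C / 2))).congr_deriv (by simp; ring)
  have hanti : AntitoneOn (fun t ↦ φ t - φ' 0 * t - C / 2 * t ^ 2) (Set.Ici 0) := by
    refine antitoneOn_of_hasDerivWithinAt_nonpos (convex_Ici 0)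
      (fun t _ ↦ (hχ t).continuousAt.continuousWithinAt)
      (fun t _ ↦ (hχ t).hasDerivWithinAt) fun t ht ↦ ?_
    rw [interior_Ici] at ht
    linarith [hslope t (le_of_lt ht)]
  have := hanti (Set.mem_Ici.2 le_rfl) (Set.mem_Ici.2 zero_le_one) zero_le_one
  simp only [mul_zero, sub_zero, mul_one, one_pow, ne_eq, OfNat.ofNat_ne_zero,
    not_false_eq_true, zero_pow] at this
  linarith

section Hessian

variable {d : ℕ} {G : EuclideanSpace ℝ (Fin d) → ℝ}

theorem inner_hess_apply (G : EuclideanSpace ℝ (Fin d) → ℝ) (y v w : EuclideanSpace ℝ (Fin d)) :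
    ⟪hess G y v, w⟫ = fderiv ℝ (fderiv ℝ G) y v w := by
  have : gradient G = (InnerProductSpace.toDual ℝ _).symm ∘ fderiv ℝ G := rfl
  rw [hess, this, LinearIsometryEquiv.comp_fderiv]
  exact InnerProductSpace.toDual_symm_apply

theorem inner_hess_comm (hG : ContDiff ℝ 2 G) (y v w : EuclideanSpace ℝ (Fin d)) :
    ⟪hess G y v, w⟫ = ⟪hess G y w, v⟫ := by
  rw [inner_hess_apply, inner_hess_apply]
  exact hG.contDiffAt.isSymmSndFDerivAt (by simp) v w

theorem isPositive_hess (hG : ContDiff ℝ 2 G) (hG0 : ∀ y v, 0 ≤ ⟪hess G y v, v⟫)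
    (y : EuclideanSpace ℝ (Fin d)) : (hess G y).IsPositive :=
  (ContinuousLinearMap.isPositive_iff _).2
    ⟨fun v w ↦ (inner_hess_comm hG y v w).trans (real_inner_comm _ _), hG0 y⟩

theorem hasFDerivAt_gradient (hG : ContDiff ℝ 2 G) (y : EuclideanSpace ℝ (Fin d)) :
    HasFDerivAt (gradient G) (hess G y) y := by
  have : ContDiff ℝ 1 (gradient G) :=
    (InnerProductSpace.toDual ℝ _).symm.contDiff.comp (hG.fderiv_right (by norm_num))
  exact (this.differentiable one_ne_zero y).hasFDerivAt

theorem hasDerivAt_apply_add_smul (hG : Differentiable ℝ G) (x v : EuclideanSpace ℝ (Fin d))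
    (t : ℝ) : HasDerivAt (fun t : ℝ ↦ G (x + t • v)) ⟪gradient G (x + t • v), v⟫ t := by
  rw [gradient, InnerProductSpace.toDual_symm_apply]
  exact (hG _).hasFDerivAt.comp_hasDerivAt t
    (((hasDerivAt_id t).smul_const v).const_add x |>.congr_deriv (one_smul ℝ v))

theorem hasDerivAt_inner_gradient_add_smul (hG : ContDiff ℝ 2 G)
    (x v : EuclideanSpace ℝ (Fin d)) (t : ℝ) :
    HasDerivAt (fun t : ℝ ↦ ⟪gradient G (x + t • v), v⟫) ⟪hess G (x + t • v) v, v⟫ t := by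
  have hline : HasDerivAt (fun t : ℝ ↦ x + t • v) v t :=
    ((hasDerivAt_id t).smul_const v).const_add x |>.congr_deriv (one_smul ℝ v)
  simpa using ((hasFDerivAt_gradient hG _).comp_hasDerivAt t hline).inner ℝ (hasDerivAt_const t v)

theorem apply_add_le_of_inner_hess_le (hG : ContDiff ℝ 2 G) {L : ℝ}
    (hL : ∀ y v, ⟪hess G y v, v⟫ ≤ L * ‖v‖ ^ 2) (x v : EuclideanSpace ℝ (Fin d)) :
    G (x + v) ≤ G x + ⟪gradient G x, v⟫ + L / 2 * ‖v‖ ^ 2 := by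
  have := le_add_deriv_add_of_hasDerivAt_of_le
    (hasDerivAt_apply_add_smul (hG.differentiable (by norm_num)) x v)
    (hasDerivAt_inner_gradient_add_smul hG x v) fun t ↦ hL (x + t • v) v
  simp only [one_smul, zero_smul, add_zero] at this
  linarith

theorem le_apply_add_of_le_inner_hess (hG : ContDiff ℝ 2 G) {c : ℝ}
    (hc : ∀ y v, c * ‖v‖ ^ 2 ≤ ⟪hess G y v, v⟫) (x v : EuclideanSpace ℝ (Fin d)) :
    G x + ⟪gradient G x, v⟫ + c / 2 * ‖v‖ ^ 2 ≤ G (x + v) := by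
  have := le_add_deriv_add_of_hasDerivAt_of_le
    (fun t ↦ (hasDerivAt_apply_add_smul (hG.differentiable (by norm_num)) x v t).neg)
    (fun t ↦ (hasDerivAt_inner_gradient_add_smul hG x v t).neg)
    fun t ↦ neg_le_neg (hc (x + t • v) v)
  simp only [Pi.neg_apply, one_smul, zero_smul, add_zero] at this
  linarith

theorem two_mul_sub_le_norm_gradient_sq (hG : ContDiff ℝ 2 G) {γ : ℝ} (hγ : 0 < γ)
    (hγG : ∀ y v, γ * ‖v‖ ^ 2 ≤ ⟪hess G y v, v⟫) (x y : EuclideanSpace ℝ (Fin d)) :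
    2 * γ * (G x - G y) ≤ ‖gradient G x‖ ^ 2 := by
  have htaylor := le_apply_add_of_le_inner_hess hG hγG x (y - x)
  rw [add_sub_cancel] at htaylor
  have hsq : 0 ≤ ‖gradient G x + γ • (y - x)‖ ^ 2 := sq_nonneg _
  rw [norm_add_sq_real, inner_smul_right, norm_smul, Real.norm_of_nonneg hγ.le] at hsq
  nlinarith

end Hessian

namespace ContinuousLinearMap

variable {E : Type*} [NormedAddCommGroup E] [InnerProductSpace ℝ E] {T : E →L[ℝ] E}

theorem IsPositive.inner_sq_le (hT : T.IsPositive) (u w : E) :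
    ⟪T u, w⟫ ^ 2 ≤ ⟪T u, u⟫ * ⟪T w, w⟫ := by
  have hquad : ∀ t : ℝ, 0 ≤ ⟪T w, w⟫ * (t * t) + 2 * ⟪T u, w⟫ * t + ⟪T u, u⟫ := fun t ↦ by
    have := hT.inner_nonneg_left (u + t • w)
    simp only [map_add, map_smul, inner_add_left, inner_add_right, real_inner_smul_left,
      real_inner_smul_right, hT.inner_left_eq_inner_right w u, real_inner_comm (T u) w] at this
    linarith
  have := discrim_le_zero hquad
  rw [discrim] at this
  linarith

theorem IsPositive.norm_apply_sq_le (hT : T.IsPositive) {K : ℝ}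
    (hK : ∀ v, ⟪T v, v⟫ ≤ K * ‖v‖ ^ 2) (u : E) : ‖T u‖ ^ 2 ≤ K * ⟪T u, u⟫ := by
  by_cases h0 : T u = 0
  · simp [h0]
  have hcs := hT.inner_sq_le u (T u)
  rw [real_inner_self_eq_norm_sq] at hcs
  have hK' := mul_le_mul_of_nonneg_left (hK (T u)) (hT.inner_nonneg_left u)
  refine le_of_mul_le_mul_right ?_ (pow_pos (norm_pos_iff.2 h0) 2)
  nlinarith

end ContinuousLinearMap

section Armijo

variable {d : ℕ} {G : EuclideanSpace ℝ (Fin d) → ℝ}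

def ArmijoCondition (G : EuclideanSpace ℝ (Fin d) → ℝ) (x p : EuclideanSpace ℝ (Fin d))
    (α β : ℝ) : Prop :=
  G (x + α • p) ≤ G x + α * β * ⟪p, gradient G x⟫

theorem armijoCondition_of_mul_le (hG : ContDiff ℝ 2 G) {L c α β : ℝ}
    (hL : ∀ y v, ⟪hess G y v, v⟫ ≤ L * ‖v‖ ^ 2) {x p : EuclideanSpace ℝ (Fin d)}
    (hdescent : c * ‖p‖ ^ 2 ≤ -⟪p, gradient G x⟫) (hβ : β ≤ 1) (hα : 0 ≤ α)
    (hαL : α * L ≤ 2 * (1 - β) * c) : ArmijoCondition G x p α β := by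
  have htaylor := apply_add_le_of_inner_hess_le hG hL x (α • p)
  rw [inner_smul_right, real_inner_comm, norm_smul, Real.norm_of_nonneg hα, mul_pow] at htaylor
  have h1 := mul_le_mul_of_nonneg_right hαL (mul_nonneg hα (sq_nonneg ‖p‖))
  have h2 := mul_le_mul_of_nonneg_left hdescent (mul_nonneg hα (sub_nonneg.2 hβ))
  unfold ArmijoCondition
  nlinarith

theorem sub_le_mul_sub_of_armijoCondition (hG : ContDiff ℝ 2 G) {γ Khat α β : ℝ} (hγ : 0 < γ)
    (hγG : ∀ y v, γ * ‖v‖ ^ 2 ≤ ⟪hess G y v, v⟫) (hKhat : 0 < Khat)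
    {x p : EuclideanSpace ℝ (Fin d)} (hgrad : ‖gradient G x‖ ^ 2 ≤ Khat * -⟪p, gradient G x⟫)
    (hαβ : 0 ≤ α * β) (harmijo : ArmijoCondition G x p α β) (y : EuclideanSpace ℝ (Fin d)) :
    G (x + α • p) - G y ≤ (1 - 2 * α * β / (Khat / γ)) * (G x - G y) := by
  have hPL := two_mul_sub_le_norm_gradient_sq hG hγ hγG x y
  have hdecrease : 2 * α * β / (Khat / γ) * (G x - G y) ≤ α * β * -⟪p, gradient G x⟫ := by
    rw [div_div_eq_mul_div, div_mul_eq_mul_div, div_le_iff₀ hKhat]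
    nlinarith [mul_le_mul_of_nonneg_left (hPL.trans hgrad) hαβ]
  unfold ArmijoCondition at harmijo
  linarith

end Armijo

section Subsampling

variable {d n s : ℕ}

noncomputable def subsampledHess (f : Fin n → EuclideanSpace ℝ (Fin d) → ℝ) (S : Fin s → Fin n)
    (x : EuclideanSpace ℝ (Fin d)) : EuclideanSpace ℝ (Fin d) →L[ℝ] EuclideanSpace ℝ (Fin d) :=
  (s : ℝ)⁻¹ • ∑ j, hess (f (S j)) x

theorem sum_comp_le_card_mul {K : Fin n → ℝ} {S : Fin s → Fin n} {Khat : ℝ}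
    (hKhat : (Function.Injective S ∧ ∃ Q : Finset (Fin n), Q.card = s ∧
        (∀ i ∈ Q, ∀ j ∉ Q, K j ≤ K i) ∧ Khat = (∑ i ∈ Q, K i) / s) ∨ ∀ i, K i ≤ Khat) :
    ∑ j, K (S j) ≤ s * Khat := by
  rcases hKhat with ⟨hS, Q, hQs, hQ, rfl⟩ | hle
  · rcases eq_or_ne s 0 with rfl | hs
    · simp
    rw [mul_div_cancel₀ _ (Nat.cast_ne_zero.2 hs), ← Finset.sum_image fun _ _ _ _ h ↦ hS h]
    refine Finset.sum_le_sum_of_card_eq_of_upper ?_ hQ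
    rw [Finset.card_image_of_injective _ hS, Finset.card_univ, Fintype.card_fin, hQs]
  · simpa using Finset.sum_le_card_nsmul Finset.univ (fun j ↦ K (S j)) Khat fun j _ ↦ hle (S j)

theorem isPositive_subsampledHess {f : Fin n → EuclideanSpace ℝ (Fin d) → ℝ}
    (hf : ∀ i, ContDiff ℝ 2 (f i)) (hf0 : ∀ i y v, 0 ≤ ⟪hess (f i) y v, v⟫)
    (S : Fin s → Fin n) (x : EuclideanSpace ℝ (Fin d)) : (subsampledHess f S x).IsPositive :=
  (ContinuousLinearMap.isPositive_sum _ fun j _ ↦ isPositive_hess (hf (S j)) (hf0 (S j)) x)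
    |>.smul_of_nonneg (by positivity)

theorem inner_subsampledHess_self_le (hs : 0 < s) {f : Fin n → EuclideanSpace ℝ (Fin d) → ℝ}
    {K : Fin n → ℝ} (hfK : ∀ i y v, ⟪hess (f i) y v, v⟫ ≤ K i * ‖v‖ ^ 2) {S : Fin s → Fin n}
    {Khat : ℝ} (hsum : ∑ j, K (S j) ≤ s * Khat) (x v : EuclideanSpace ℝ (Fin d)) :
    ⟪subsampledHess f S x v, v⟫ ≤ Khat * ‖v‖ ^ 2 := by
  have hs' : (0 : ℝ) < s := Nat.cast_pos.2 hs
  calc ⟪subsampledHess f S x v, v⟫ = (s : ℝ)⁻¹ * ∑ j, ⟪hess (f (S j)) x v, v⟫ := by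
        rw [subsampledHess, FunLike.coe_smul, Pi.smul_apply,
          real_inner_smul_left, FunLike.coe_sum, Finset.sum_apply, sum_inner]
    _ ≤ (s : ℝ)⁻¹ * ((∑ j, K (S j)) * ‖v‖ ^ 2) := by
        rw [Finset.sum_mul]
        gcongr with j
        exact hfK (S j) x v
    _ ≤ (s : ℝ)⁻¹ * ((s * Khat) * ‖v‖ ^ 2) := by gcongr
    _ = Khat * ‖v‖ ^ 2 := by field_simp

end Subsampling

theorem stmt_1_general {d n s : ℕ} (hs : 0 < s)
    (f : Fin n → EuclideanSpace ℝ (Fin d) → ℝ) (K : Fin n → ℝ)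
    (F : EuclideanSpace ℝ (Fin d) → ℝ)
    (γ Kc β ε Khat : ℝ) (x xstar p : EuclideanSpace ℝ (Fin d))
    (S : Fin s → Fin n)
    -- each fᵢ is twice continuously differentiable, convex, with `∇²fᵢ ⪯ Kᵢ I`
    (hf : ∀ i, ContDiff ℝ 2 (f i))
    (hKpos : ∀ i, 0 < K i)
    (hfpsd : ∀ i y v, 0 ≤ ⟪(hess (f i) y) v, v⟫)
    (hfK : ∀ i y v, ⟪(hess (f i) y) v, v⟫ ≤ K i * ‖v‖ ^ 2)
    -- `F = (1/n) ∑ fᵢ`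
    (hF : ∀ y, F y = (1 / n : ℝ) * ∑ i, f i y)
    -- `γ I ⪯ ∇²F ⪯ K I` with `0 < γ ≤ K`
    (hγ : 0 < γ) (hγK : γ ≤ Kc)
    (hFlow : ∀ y v, γ * ‖v‖ ^ 2 ≤ ⟪(hess F y) v, v⟫)
    (hFup : ∀ y v, ⟪(hess F y) v, v⟫ ≤ Kc * ‖v‖ ^ 2)
    (hβ : 0 < β) (hβ1 : β < 1)
    -- `Khat = K̂_{|S|}` if the sample is without replacement (distinct indices),
    -- and `Khat = K̂₁ = max Kᵢ` otherwise
    (hKhat :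
      (Function.Injective S ∧ ∃ Q : Finset (Fin n), Q.card = s ∧
          (∀ i ∈ Q, ∀ j ∉ Q, K j ≤ K i) ∧ Khat = (∑ i ∈ Q, K i) / s) ∨
      (¬ Function.Injective S ∧ (∀ i, K i ≤ Khat) ∧ ∃ i, Khat = K i))
    -- `λ_min(H(x)) ≥ (1-ε)γ` for the sub-sampled Hessian `H(x) = (1/|S|) ∑_{j∈S} ∇²f_j(x)`
    (hH : ∀ v, (1 - ε) * γ * ‖v‖ ^ 2 ≤
        ⟪((s : ℝ)⁻¹ • ∑ j, hess (f (S j)) x) v, v⟫)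
    -- `p = -H(x)⁻¹ ∇F(x)`
    (hp : ((s : ℝ)⁻¹ • ∑ j, hess (f (S j)) x) p = -(gradient F x)) :
    -- (a) any `0 < α ≤ 2(1-β)(1-ε)/κ` satisfies the Armijo condition
    (∀ α : ℝ, 0 < α → α ≤ 2 * (1 - β) * (1 - ε) / (Kc / γ) →
        F (x + α • p) ≤ F x + α * β * ⟪p, gradient F x⟫) ∧
    -- (b) any `α > 0` satisfying the Armijo condition yields linear decrease
    (∀ α : ℝ, 0 < α → F (x + α • p) ≤ F x + α * β * ⟪p, gradient F x⟫ →
        F (x + α • p) - F xstar ≤ (1 - 2 * α * β / (Khat / γ)) * (F x - F xstar)) := by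
  have hFc : ContDiff ℝ 2 F := by
    rw [show F = fun y ↦ (1 / n : ℝ) * ∑ i, f i y from funext hF]
    exact contDiff_const.mul (ContDiff.sum fun i _ ↦ hf i)
  have hHp : ⟪subsampledHess f S x p, p⟫ = -⟪p, gradient F x⟫ := by
    rw [subsampledHess, hp, inner_neg_left, real_inner_comm]
  refine ⟨fun α hα hαle ↦ armijoCondition_of_mul_le hFc hFup (hHp ▸ hH p) hβ1.le hα.le ?_,
    fun α hα harmijo ↦ ?_⟩
  · rw [div_div_eq_mul_div, le_div_iff₀ (hγ.trans_le hγK)] at hαle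
    linarith
  have hsum := sum_comp_le_card_mul (hKhat.imp_right (·.2.1))
  have hKhat_pos : 0 < Khat := pos_of_mul_pos_right
    ((Finset.sum_pos (fun j _ ↦ hKpos (S j)) ⟨⟨0, hs⟩, Finset.mem_univ _⟩).trans_le hsum)
    (Nat.cast_nonneg s)
  have hgrad : ‖gradient F x‖ ^ 2 ≤ Khat * -⟪p, gradient F x⟫ := by
    rw [← hHp, ← norm_neg, ← hp]
    exact (isPositive_subsampledHess hf hfpsd S x).norm_apply_sq_le
      (inner_subsampledHess_self_le hs hfK hsum x) p
  exact sub_le_mul_sub_of_armijoCondition hFc hγ hFlow hKhat_pos hgrad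
    (mul_nonneg hα.le hβ.le) harmijo xstar

theorem stmt_1 {d n s : ℕ} (hn : 0 < n) (hs : 0 < s)
    (f : Fin n → EuclideanSpace ℝ (Fin d) → ℝ) (K : Fin n → ℝ)
    (F : EuclideanSpace ℝ (Fin d) → ℝ)
    (γ Kc β ε Khat : ℝ) (x xstar p : EuclideanSpace ℝ (Fin d))
    (S : Fin s → Fin n)
    -- each fᵢ is twice continuously differentiable, convex, with `∇²fᵢ ⪯ Kᵢ I`
    (hf : ∀ i, ContDiff ℝ 2 (f i))
    (hKpos : ∀ i, 0 < K i)
    (hfpsd : ∀ i y v, 0 ≤ ⟪(hess (f i) y) v, v⟫)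
    (hfK : ∀ i y v, ⟪(hess (f i) y) v, v⟫ ≤ K i * ‖v‖ ^ 2)
    -- `F = (1/n) ∑ fᵢ`
    (hF : ∀ y, F y = (1 / n : ℝ) * ∑ i, f i y)
    -- `γ I ⪯ ∇²F ⪯ K I` with `0 < γ ≤ K`
    (hγ : 0 < γ) (hγK : γ ≤ Kc)
    (hFlow : ∀ y v, γ * ‖v‖ ^ 2 ≤ ⟪(hess F y) v, v⟫)
    (hFup : ∀ y v, ⟪(hess F y) v, v⟫ ≤ Kc * ‖v‖ ^ 2)
    -- `xstar` is the (unique) minimizer of `F`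
    (hmin : ∀ y, F xstar ≤ F y)
    (hβ : 0 < β) (hβ1 : β < 1) (hε : 0 < ε) (hε1 : ε < 1)
    -- `Khat = K̂_{|S|}` if the sample is without replacement (distinct indices),
    -- and `Khat = K̂₁ = max Kᵢ` otherwise
    (hKhat :
      (Function.Injective S ∧ ∃ Q : Finset (Fin n), Q.card = s ∧
          (∀ i ∈ Q, ∀ j ∉ Q, K j ≤ K i) ∧ Khat = (∑ i ∈ Q, K i) / s) ∨
      (¬ Function.Injective S ∧ (∀ i, K i ≤ Khat) ∧ ∃ i, Khat = K i))
    -- `λ_min(H(x)) ≥ (1-ε)γ` for the sub-sampled Hessian `H(x) = (1/|S|) ∑_{j∈S} ∇²f_j(x)`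
    (hH : ∀ v, (1 - ε) * γ * ‖v‖ ^ 2 ≤
        ⟪((s : ℝ)⁻¹ • ∑ j, hess (f (S j)) x) v, v⟫)
    -- `p = -H(x)⁻¹ ∇F(x)`
    (hp : ((s : ℝ)⁻¹ • ∑ j, hess (f (S j)) x) p = -(gradient F x)) :
    -- (a) any `0 < α ≤ 2(1-β)(1-ε)/κ` satisfies the Armijo condition
    (∀ α : ℝ, 0 < α → α ≤ 2 * (1 - β) * (1 - ε) / (Kc / γ) →
        F (x + α • p) ≤ F x + α * β * ⟪p, gradient F x⟫) ∧
    -- (b) any `α > 0` satisfying the Armijo condition yields linear decrease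
    (∀ α : ℝ, 0 < α → F (x + α • p) ≤ F x + α * β * ⟪p, gradient F x⟫ →
        F (x + α • p) - F xstar ≤ (1 - 2 * α * β / (Khat / γ)) * (F x - F xstar)) :=
  stmt_1_general hs f K F γ Kc β ε Khat x xstar p S hf hKpos hfpsd hfK hF hγ hγK hFlow hFup hβ hβ1
    hKhat hH hp
end

section
/- Let β ∈ (0,1), 0 < θ₂ < 1, x ∈ ℝ^p, and let S be a sample of distinct indices of size s. Let H = H(x), take λ > λ_min(H), and let Ĥ = P(λ; H) be the spectral regularization of H. Suppose 0 ≤ θ₁ ≤ (1/2)√( λ / max{λ, K̂_s} ) and p ∈ ℝ^p satisfies ‖Ĥp + ∇F(x)‖ ≤ θ₁‖∇F(x)‖ and pᵀ∇F(x) ≤ −(1−θ₂) pᵀĤp. Then: (a) every step size α with 0 < α ≤ 2(1−θ₂)(1−β)λ/K satisfies the Armijo condition F(x+αp) ≤ F(x) + αβ pᵀ∇F(x); (b) for any α satisfying the Armijo condition, F(x+αp) ≤ F(x) − (αβ / (2 max{K̂_s, λ})) ‖∇F(x)‖²; (c) if in addition γ·I ⪯ ∇²F(x) for all x with γ > 0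 (so F has a unique minimizer x*), then F(x+αp) − F(x*) ≤ (1 − αβγ / max{K̂_s, λ})(F(x) − F(x*)). -/
open scoped RealInnerProductSpace

/-!
The eigenvalues of the sub-sampled Hessian are Rayleigh quotients, hence lie in `[0, K̂_s]`
(a sum of `s` distinct `Kᵢ` is at most the sum of the `s` largest), so `Ĥ` has an orthonormal
eigenbasis with eigenvalues `μₖ ∈ [λ, M]`, `M = max{K̂_s, λ}`. In these coordinates, with
`r = Ĥp + ∇F(x)`, completing the square gives `pₖ gₖ ≤ rₖ²/λ - (3/4) gₖ²/M`, and the residual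
bound `‖r‖² ≤ θ₁²‖∇F(x)‖² ≤ (λ/4M)‖∇F(x)‖²` turns this into `pᵀ∇F(x) ≤ -‖∇F(x)‖²/(2M)`,
which is (b). Part (a) is the descent lemma `F(x+αp) ≤ F(x) + α pᵀ∇F(x) + Kα²‖p‖²/2` combined
with `pᵀ∇F(x) ≤ -(1-θ₂)λ‖p‖²`; part (c) combines (b) with the Polyak–Łojasiewicz inequality
`2γ(F(x) - F(x*)) ≤ ‖∇F(x)‖²`. The second-order Taylor bounds along lines come from the
monotonicity of the one-dimensional remainders.
-/

lemma le_apply_of_hasDerivAt_nonneg {ψ ψ' : ℝ → ℝ} {t : ℝ} (ht : 0 ≤ t)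
    (hψ : ∀ u, HasDerivAt ψ (ψ' u) u) (hψ' : ∀ u, 0 ≤ u → 0 ≤ ψ' u) : ψ 0 ≤ ψ t :=
  monotoneOn_of_hasDerivWithinAt_nonneg (convex_Ici 0)
    (fun u _ => (hψ u).continuousAt.continuousWithinAt) (fun u _ => (hψ u).hasDerivWithinAt)
    (fun u hu => hψ' u (interior_subset hu)) Set.self_mem_Ici ht ht

lemma le_add_mul_add_sq_of_deriv2_le {φ φ' φ'' : ℝ → ℝ} {C t : ℝ} (ht : 0 ≤ t)
    (hφ : ∀ u, HasDerivAt φ (φ' u) u) (hφ' : ∀ u, HasDerivAt φ' (φ'' u) u)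
    (hC : ∀ u, φ'' u ≤ C) :
    φ t ≤ φ 0 + t * φ' 0 + C * t ^ 2 / 2 := by
  have hslope : ∀ u, 0 ≤ u → φ' u ≤ φ' 0 + C * u := fun u hu => by
    simpa using le_apply_of_hasDerivAt_nonneg (ψ := fun v => φ' 0 + C * v - φ' v) hu
      (fun v => (((hasDerivAt_id v).const_mul C).const_add (φ' 0)).sub (hφ' v))
      (fun v _ => by simpa using hC v)
  have hrem : ∀ u, HasDerivAt (fun v => φ 0 + v * φ' 0 + C * v ^ 2 / 2 - φ v)
      (φ' 0 + C * u - φ' u) u := fun u => by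
    have := ((((hasDerivAt_id u).mul_const (φ' 0)).const_add (φ 0)).fun_add
      (((hasDerivAt_pow 2 u).const_mul C).div_const 2)).fun_sub (hφ u)
    exact this.congr_deriv (by ring)
  have := le_apply_of_hasDerivAt_nonneg ht hrem fun u hu => sub_nonneg.2 (hslope u hu)
  linarith

lemma add_mul_add_sq_le_of_le_deriv2 {φ φ' φ'' : ℝ → ℝ} {c t : ℝ} (ht : 0 ≤ t)
    (hφ : ∀ u, HasDerivAt φ (φ' u) u) (hφ' : ∀ u, HasDerivAt φ' (φ'' u) u)
    (hc : ∀ u, c ≤ φ'' u) :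
    φ 0 + t * φ' 0 + c * t ^ 2 / 2 ≤ φ t := by
  have := le_add_mul_add_sq_of_deriv2_le (φ := fun u => -φ u) (C := -c) ht (fun u => (hφ u).neg)
    (fun u => (hφ' u).neg) (fun u => neg_le_neg (hc u))
  linarith

lemma mul_le_of_le_div_of_nonneg {a b c : ℝ} (ha : 0 ≤ a) (hb : 0 ≤ b) (h : a ≤ b / c) :
    a * c ≤ b := by
  rcases le_or_gt c 0 with hc | hc
  · exact (mul_nonpos_of_nonneg_of_nonpos ha hc).trans hb
  · exact mul_le_of_le_div₀ hb hc.le h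

lemma mul_le_sq_div_sub_sq_div {lam μ M : ℝ} (hlam : 0 < lam) (hlμ : lam ≤ μ) (hμM : μ ≤ M)
    (c g : ℝ) : c * g ≤ (μ * c + g) ^ 2 / lam - 3 / 4 * (g ^ 2 / M) := by
  have hμ : 0 < μ := hlam.trans_le hlμ
  have hsq : c * g ≤ (μ * c + g) ^ 2 / μ - 3 / 4 * (g ^ 2 / μ) := by
    have hsquare : (μ * c + g) ^ 2 / μ - 3 / 4 * (g ^ 2 / μ) - c * g
        = (μ * c + g / 2) ^ 2 / μ := by
      field_simp
      ring
    linarith [div_nonneg (sq_nonneg (μ * c + g / 2)) hμ.le]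
  calc c * g ≤ (μ * c + g) ^ 2 / μ - 3 / 4 * (g ^ 2 / μ) := hsq
    _ ≤ (μ * c + g) ^ 2 / lam - 3 / 4 * (g ^ 2 / M) := by gcongr

section LineBounds

variable {E : Type*} [NormedAddCommGroup E] [InnerProductSpace ℝ E] [CompleteSpace E]
  {F : E → ℝ} {H : E → E →L[ℝ] E}

lemma hasDerivAt_apply_add_smul_s4 (hF : Differentiable ℝ F) (x v : E) (t : ℝ) :
    HasDerivAt (fun u : ℝ => F (x + u • v)) ⟪gradient F (x + t • v), v⟫ t := by
  have hline : HasDerivAt (fun u : ℝ => x + u • v) v t := by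
    simpa using ((hasDerivAt_id t).smul_const v).const_add x
  have := (hF (x + t • v)).hasGradientAt.hasFDerivAt.comp_hasDerivAt t hline
  rwa [InnerProductSpace.toDual_apply_apply] at this

lemma hasDerivAt_inner_gradient_add_smul_s4 (hH : ∀ y, HasFDerivAt (gradient F) (H y) y)
    (x v : E) (t : ℝ) :
    HasDerivAt (fun u : ℝ => ⟪gradient F (x + u • v), v⟫) ⟪H (x + t • v) v, v⟫ t := by
  have hline : HasDerivAt (fun u : ℝ => x + u • v) v t := by
    simpa using ((hasDerivAt_id t).smul_const v).const_add x
  simpa using ((hH (x + t • v)).comp_hasDerivAt t hline).inner ℝ (hasDerivAt_const t v)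

theorem apply_add_smul_le_of_inner_le (hF : Differentiable ℝ F)
    (hH : ∀ y, HasFDerivAt (gradient F) (H y) y) {x v : E} {C t : ℝ} (ht : 0 ≤ t)
    (hC : ∀ y, ⟪H y v, v⟫ ≤ C) :
    F (x + t • v) ≤ F x + t * ⟪gradient F x, v⟫ + C * t ^ 2 / 2 := by
  simpa using le_add_mul_add_sq_of_deriv2_le ht (hasDerivAt_apply_add_smul_s4 hF x v)
    (hasDerivAt_inner_gradient_add_smul_s4 hH x v) (fun u => hC (x + u • v))

theorem le_apply_add_smul_of_le_inner (hF : Differentiable ℝ F)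
    (hH : ∀ y, HasFDerivAt (gradient F) (H y) y) {x v : E} {c t : ℝ} (ht : 0 ≤ t)
    (hc : ∀ y, c ≤ ⟪H y v, v⟫) :
    F x + t * ⟪gradient F x, v⟫ + c * t ^ 2 / 2 ≤ F (x + t • v) := by
  simpa using add_mul_add_sq_le_of_le_deriv2 ht (hasDerivAt_apply_add_smul_s4 hF x v)
    (hasDerivAt_inner_gradient_add_smul_s4 hH x v) (fun u => hc (x + u • v))

/-- The Polyak–Łojasiewicz inequality of a strongly convex function. -/
theorem two_mul_sub_le_norm_gradient_sq_s4 (hF : Differentiable ℝ F)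
    (hH : ∀ y, HasFDerivAt (gradient F) (H y) y) {γ : ℝ} (hγ : 0 < γ)
    (hγH : ∀ y v, γ * ‖v‖ ^ 2 ≤ ⟪H y v, v⟫) (x y : E) :
    2 * γ * (F x - F y) ≤ ‖gradient F x‖ ^ 2 := by
  have hlow := le_apply_add_smul_of_le_inner hF hH (x := x) (v := y - x) zero_le_one
    (fun z => hγH z (y - x))
  rw [one_smul, add_sub_cancel, one_mul, one_pow, mul_one] at hlow
  have hcs : -(‖gradient F x‖ * ‖y - x‖) ≤ ⟪gradient F x, y - x⟫ :=
    neg_le_of_abs_le (abs_real_inner_le_norm _ _)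
  nlinarith [sq_nonneg (γ * ‖y - x‖ - ‖gradient F x‖)]

theorem armijo_of_le_div (hF : Differentiable ℝ F)
    (hH : ∀ y, HasFDerivAt (gradient F) (H y) y) {x p : E} {K lam q θ β α : ℝ}
    (hK : ∀ y, ⟪H y p, p⟫ ≤ K * ‖p‖ ^ 2) (hlam : 0 ≤ lam) (hθ : θ ≤ 1) (hβ : β ≤ 1)
    (hq : lam * ‖p‖ ^ 2 ≤ q) (hp : ⟪p, gradient F x⟫ ≤ -(1 - θ) * q) (hα : 0 ≤ α)
    (hαK : α ≤ 2 * (1 - θ) * (1 - β) * lam / K) :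
    F (x + α • p) ≤ F x + α * β * ⟪p, gradient F x⟫ := by
  have hc : 0 ≤ 2 * (1 - θ) * (1 - β) * lam :=
    mul_nonneg (mul_nonneg (mul_nonneg zero_le_two (sub_nonneg.2 hθ)) (sub_nonneg.2 hβ)) hlam
  have hstep : α * K ≤ 2 * (1 - θ) * (1 - β) * lam := mul_le_of_le_div_of_nonneg hα hc hαK
  have hslope : ⟪p, gradient F x⟫ ≤ -((1 - θ) * lam * ‖p‖ ^ 2) := by
    linarith [mul_le_mul_of_nonneg_left hq (sub_nonneg.2 hθ)]
  have hdesc := apply_add_smul_le_of_inner_le hF hH (x := x) hα hK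
  rw [real_inner_comm] at hdesc
  have hquad : α * K * (α * ‖p‖ ^ 2) ≤ 2 * (1 - θ) * (1 - β) * lam * (α * ‖p‖ ^ 2) :=
    mul_le_mul_of_nonneg_right hstep (by positivity)
  have hlin : α * (1 - β) * ⟪p, gradient F x⟫ ≤ α * (1 - β) * -((1 - θ) * lam * ‖p‖ ^ 2) :=
    mul_le_mul_of_nonneg_left hslope (mul_nonneg hα (by linarith))
  linarith

end LineBounds

lemma ContDiff.contDiff_gradient {E : Type*} [NormedAddCommGroup E] [InnerProductSpace ℝ E]
    [CompleteSpace E] {f : E → ℝ} (hf : ContDiff ℝ 2 f) : ContDiff ℝ 1 (gradient f) :=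
  (InnerProductSpace.toDual ℝ E).symm.contDiff.comp (hf.fderiv_right (by norm_num))

lemma gradient_const_mul_sum {E ι : Type*} [NormedAddCommGroup E] [InnerProductSpace ℝ E]
    [CompleteSpace E] [Fintype ι] {f : ι → E → ℝ} (hf : ∀ i, Differentiable ℝ (f i)) (c : ℝ) :
    gradient (fun y => c * ∑ i, f i y) = fun y => c • ∑ i, gradient (f i) y := by
  funext y
  refine HasGradientAt.gradient ?_
  rw [hasGradientAt_iff_hasFDerivAt, map_smul, map_sum]
  simp only [toDual_gradient]
  exact (HasFDerivAt.fun_sum fun i _ => (hf i y).hasFDerivAt).const_mul c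

lemma inner_smul_sum_apply {E ι : Type*} [NormedAddCommGroup E] [InnerProductSpace ℝ E]
    (s : Finset ι) (c : ℝ) (A : ι → E →L[ℝ] E) (v w : E) :
    ⟪(c • ∑ i ∈ s, A i) v, w⟫ = c * ∑ i ∈ s, ⟪A i v, w⟫ := by
  rw [smul_apply, sum_apply, real_inner_smul_left, sum_inner]

section Hessian

variable {d : ℕ}

lemma hasFDerivAt_gradient_hess {f : EuclideanSpace ℝ (Fin d) → ℝ} (hf : ContDiff ℝ 2 f) (y) :
    HasFDerivAt (gradient f) (hess f y) y :=
  (hf.contDiff_gradient.differentiable one_ne_zero y).hasFDerivAt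

lemma hess_const_mul_sum {ι : Type*} [Fintype ι] {f : ι → EuclideanSpace ℝ (Fin d) → ℝ}
    (hf : ∀ i, ContDiff ℝ 2 (f i)) (c : ℝ) (y) :
    hess (fun y => c * ∑ i, f i y) y = c • ∑ i, hess (f i) y := by
  rw [hess, gradient_const_mul_sum (fun i => (hf i).differentiable (by norm_num))]
  exact ((HasFDerivAt.fun_sum fun i _ => hasFDerivAt_gradient_hess (hf i) y).const_smul c).fderiv

lemma inner_hess_const_mul_sum_le {ι : Type*} [Fintype ι] {f : ι → EuclideanSpace ℝ (Fin d) → ℝ}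
    (hf : ∀ i, ContDiff ℝ 2 (f i)) {K : ι → ℝ}
    (hfK : ∀ i y v, ⟪hess (f i) y v, v⟫ ≤ K i * ‖v‖ ^ 2) {c : ℝ} (hc : 0 ≤ c) (y v) :
    ⟪hess (fun y => c * ∑ i, f i y) y v, v⟫ ≤ c * ∑ i, K i * ‖v‖ ^ 2 := by
  rw [hess_const_mul_sum hf, inner_smul_sum_apply]
  exact mul_le_mul_of_nonneg_left (Finset.sum_le_sum fun i _ => hfK i y v) hc

end Hessian

lemma eigenvalue_eq_inner {E : Type*} [NormedAddCommGroup E] [InnerProductSpace ℝ E]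
    {T : E →L[ℝ] E} {v : E} {ν : ℝ} (hv : ‖v‖ = 1) (h : T v = ν • v) : ν = ⟪T v, v⟫ := by
  rw [h, real_inner_smul_left, real_inner_self_eq_norm_sq, hv]
  ring

section Eigenbasis

variable {E ι : Type*} [NormedAddCommGroup E] [InnerProductSpace ℝ E] [Fintype ι]
  (b : OrthonormalBasis ι ℝ E) {T : E →L[ℝ] E} {μ : ι → ℝ}

lemma inner_apply_eq_mul_of_eigen (hT : ∀ i, T (b i) = μ i • b i) (k : ι) (p : E) :
    ⟪b k, T p⟫ = μ k * ⟪b k, p⟫ := by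
  classical
  conv_lhs => rw [← b.sum_repr' p]
  simp [map_sum, inner_sum, hT, inner_smul_right, b.inner_eq_ite, mul_comm]

lemma mul_norm_sq_le_inner_apply_of_eigen (hT : ∀ i, T (b i) = μ i • b i) {lam : ℝ}
    (hμ : ∀ i, lam ≤ μ i) (p : E) : lam * ‖p‖ ^ 2 ≤ ⟪p, T p⟫ := by
  rw [← b.sum_inner_mul_inner, ← b.sum_sq_inner_right, Finset.mul_sum]
  refine Finset.sum_le_sum fun k _ => ?_
  rw [inner_apply_eq_mul_of_eigen b hT, real_inner_comm]
  nlinarith [hμ k, sq_nonneg ⟪b k, p⟫]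

lemma inner_le_neg_norm_sq_div_of_eigen (hT : ∀ i, T (b i) = μ i • b i) {lam M : ℝ}
    (hlam : 0 < lam) (hlM : lam ≤ M) (hμ : ∀ i, lam ≤ μ i ∧ μ i ≤ M) {θ : ℝ} (hθ : θ ≤ 1 / 2 * √(lam / M))
    {p g : E} (hres : ‖T p + g‖ ≤ θ * ‖g‖) : ⟪p, g⟫ ≤ -(‖g‖ ^ 2 / (2 * M)) := by
  have hres_sq : ‖T p + g‖ ^ 2 ≤ lam / (4 * M) * ‖g‖ ^ 2 :=
    calc ‖T p + g‖ ^ 2 ≤ (1 / 2 * √(lam / M) * ‖g‖) ^ 2 :=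
          pow_le_pow_left₀ (norm_nonneg _)
            (hres.trans (mul_le_mul_of_nonneg_right hθ (norm_nonneg _))) 2
      _ = lam / (4 * M) * ‖g‖ ^ 2 := by
          rw [mul_pow, mul_pow, Real.sq_sqrt (div_nonneg hlam.le (hlam.le.trans hlM))]
          ring
  have hcoord : ∀ k, ⟪b k, T p + g⟫ = μ k * ⟪b k, p⟫ + ⟪b k, g⟫ := fun k => by
    rw [inner_add_right, inner_apply_eq_mul_of_eigen b hT]
  rw [← b.sum_sq_inner_right (T p + g)] at hres_sq
  simp_rw [hcoord] at hres_sq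
  have hres' : (∑ k, (μ k * ⟪b k, p⟫ + ⟪b k, g⟫) ^ 2) / lam ≤ ‖g‖ ^ 2 / (4 * M) := by
    rw [div_le_iff₀ hlam, div_mul_comm]
    exact hres_sq
  calc ⟪p, g⟫ = ∑ k, ⟪b k, p⟫ * ⟪b k, g⟫ := by
        rw [← b.sum_inner_mul_inner]
        simp_rw [real_inner_comm p]
    _ ≤ ∑ k, ((μ k * ⟪b k, p⟫ + ⟪b k, g⟫) ^ 2 / lam - 3 / 4 * (⟪b k, g⟫ ^ 2 / M)) :=
        Finset.sum_le_sum fun k _ =>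
          mul_le_sq_div_sub_sq_div hlam (hμ k).1 (hμ k).2 _ _
    _ = (∑ k, (μ k * ⟪b k, p⟫ + ⟪b k, g⟫) ^ 2) / lam - 3 / 4 * (‖g‖ ^ 2 / M) := by
        rw [Finset.sum_sub_distrib, ← Finset.sum_div, ← Finset.mul_sum, ← Finset.sum_div,
          b.sum_sq_inner_right]
    _ ≤ ‖g‖ ^ 2 / (4 * M) - 3 / 4 * (‖g‖ ^ 2 / M) := by gcongr
    _ = -(‖g‖ ^ 2 / (2 * M)) := by ring

end Eigenbasis

section TopValues

variable {ι : Type*} [DecidableEq ι] (K : ι → ℝ) {Q : Finset ι}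

lemma sum_le_sum_of_card_eq_of_forall_le {T : Finset ι} (hcard : T.card = Q.card)
    (htop : ∀ i ∈ Q, ∀ j ∉ Q, K j ≤ K i) : ∑ i ∈ T, K i ≤ ∑ i ∈ Q, K i := by
  have e := Finset.equivOfCardEq (Finset.card_sdiff_comm hcard)
  have hout : ∑ i ∈ T \ Q, K i ≤ ∑ i ∈ Q \ T, K i := by
    rw [← Finset.sum_coe_sort (T \ Q), ← Finset.sum_coe_sort (Q \ T),
      ← e.sum_comp (fun j => K j)]
    exact Finset.sum_le_sum fun i _ =>
      htop _ (Finset.mem_sdiff.mp (e i).2).1 _ (Finset.mem_sdiff.mp i.2).2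
  have hT := Finset.sum_inter_add_sum_sdiff T Q K
  have hQ := Finset.sum_inter_add_sum_sdiff Q T K
  rw [Finset.inter_comm] at hQ
  linarith

lemma sum_comp_le_sum_of_forall_le {σ : Type*} [Fintype σ] {S : σ → ι}
    (hS : Function.Injective S) (hcard : Q.card = Fintype.card σ)
    (htop : ∀ i ∈ Q, ∀ j ∉ Q, K j ≤ K i) : ∑ j, K (S j) ≤ ∑ i ∈ Q, K i := by
  rw [← Finset.sum_image fun a _ b _ h => hS h]
  refine sum_le_sum_of_card_eq_of_forall_le K ?_ htop
  rw [Finset.card_image_of_injective _ hS, Finset.card_univ, hcard]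

end TopValues

lemma eigenvalue_mem_Icc_of_subsample {E ι : Type*} [NormedAddCommGroup E]
    [InnerProductSpace ℝ E] [DecidableEq ι] {s : ℕ} {S : Fin s → ι} (hS : Function.Injective S)
    {K : ι → ℝ} {Q : Finset ι} (hcard : Q.card = s) (htop : ∀ i ∈ Q, ∀ j ∉ Q, K j ≤ K i)
    {A : ι → E →L[ℝ] E} {v : E} (hv : ‖v‖ = 1) (hA : ∀ i, 0 ≤ ⟪A i v, v⟫ ∧ ⟪A i v, v⟫ ≤ K i)
    {ν : ℝ} (h : ((s : ℝ)⁻¹ • ∑ j, A (S j)) v = ν • v) :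
    0 ≤ ν ∧ ν ≤ (∑ i ∈ Q, K i) / s := by
  rw [eigenvalue_eq_inner hv h, inner_smul_sum_apply, div_eq_inv_mul]
  refine ⟨mul_nonneg (by positivity) (Finset.sum_nonneg fun j _ => (hA (S j)).1),
    mul_le_mul_of_nonneg_left ?_ (by positivity)⟩
  exact (Finset.sum_le_sum fun j _ => (hA (S j)).2).trans
    (sum_comp_le_sum_of_forall_le K hS (by simp [hcard]) htop)

theorem stmt_4_general {d n s : ℕ}
    (f : Fin n → EuclideanSpace ℝ (Fin d) → ℝ) (K : Fin n → ℝ)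
    (F : EuclideanSpace ℝ (Fin d) → ℝ)
    (Kc Khats β θ₁ θ₂ lam : ℝ) (x p : EuclideanSpace ℝ (Fin d))
    (S : Fin s → Fin n)
    (b : OrthonormalBasis (Fin d) ℝ (EuclideanSpace ℝ (Fin d))) (ev : Fin d → ℝ)
    (Hhat : EuclideanSpace ℝ (Fin d) →L[ℝ] EuclideanSpace ℝ (Fin d))
    -- each fᵢ is twice continuously differentiable, convex, with `∇²fᵢ ⪯ Kᵢ I`
    (hf : ∀ i, ContDiff ℝ 2 (f i))
    (hfpsd : ∀ i y v, 0 ≤ ⟪(hess (f i) y) v, v⟫)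
    (hfK : ∀ i y v, ⟪(hess (f i) y) v, v⟫ ≤ K i * ‖v‖ ^ 2)
    -- `F = (1/n) ∑ fᵢ`, so that `∇²F ⪯ K I` with `K = (1/n) ∑ Kᵢ`
    (hF : ∀ y, F y = (1 / n : ℝ) * ∑ i, f i y)
    (hKc : Kc = (∑ i, K i) / n)
    -- `K̂_s` is the average of the `s` largest `Kᵢ`'s
    (hKhats : ∃ Q : Finset (Fin n), Q.card = s ∧
        (∀ i ∈ Q, ∀ j ∉ Q, K j ≤ K i) ∧ Khats = (∑ i ∈ Q, K i) / s)
    (hβ : 0 < β) (hβ1 : β < 1) (hθ₂1 : θ₂ < 1)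
    -- the sample consists of distinct indices
    (hSinj : Function.Injective S)
    -- spectral decomposition of the sub-sampled Hessian `H = H(x)`:
    -- `b` is an orthonormal eigenbasis with eigenvalues `ev`
    (heig : ∀ i, ((s : ℝ)⁻¹ • ∑ j, hess (f (S j)) x) (b i) = ev i • b i)
    -- `λ > λ_min(H)`
    (hlam : ∃ i, ev i < lam)
    -- `Ĥ = P(λ; H)`: the spectral regularization of `H`
    (hHhat : ∀ i, Hhat (b i) = max (ev i) lam • b i)
    -- `0 ≤ θ₁ ≤ (1/2)√(λ / max{λ, K̂_s})`
    (hθ₁le : θ₁ ≤ (1 / 2) * Real.sqrt (lam / max lam Khats))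
    -- inexactness conditions on the update direction `p`
    (hp₁ : ‖Hhat p + gradient F x‖ ≤ θ₁ * ‖gradient F x‖)
    (hp₂ : ⟪p, gradient F x⟫ ≤ -(1 - θ₂) * ⟪p, Hhat p⟫) :
    -- (a) any `0 < α ≤ 2(1-θ₂)(1-β)λ/K` satisfies the Armijo condition
    (∀ α : ℝ, 0 < α → α ≤ 2 * (1 - θ₂) * (1 - β) * lam / Kc →
        F (x + α • p) ≤ F x + α * β * ⟪p, gradient F x⟫) ∧
    -- (b) any `α > 0` satisfying the Armijo condition yields the stated decrease
    (∀ α : ℝ, 0 < α → F (x + α • p) ≤ F x + α * β * ⟪p, gradient F x⟫ →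
        F (x + α • p) ≤ F x - α * β / (2 * max Khats lam) * ‖gradient F x‖ ^ 2) ∧
    -- (c) if moreover `F` is `γ`-strongly convex with minimizer `xstar`, a linear rate holds
    (∀ (γ : ℝ) (xstar : EuclideanSpace ℝ (Fin d)), 0 < γ →
        (∀ y v, γ * ‖v‖ ^ 2 ≤ ⟪(hess F y) v, v⟫) → (∀ y, F xstar ≤ F y) →
        ∀ α : ℝ, 0 < α → F (x + α • p) ≤ F x + α * β * ⟪p, gradient F x⟫ →
          F (x + α • p) - F xstar ≤
            (1 - α * β * γ / max Khats lam) * (F x - F xstar)) := by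
  obtain ⟨Q, hQcard, hQtop, rfl⟩ := hKhats
  have hFeq : F = fun y => (1 / n : ℝ) * ∑ i, f i y := funext hF
  have hFc : ContDiff ℝ 2 F := hFeq ▸ contDiff_const.mul (ContDiff.sum fun i _ => hf i)
  have hFd : Differentiable ℝ F := hFc.differentiable (by norm_num)
  have hH := hasFDerivAt_gradient_hess hFc
  have hHK : ∀ y v, ⟪hess F y v, v⟫ ≤ Kc * ‖v‖ ^ 2 := fun y v => by
    simpa [hFeq, hKc, div_eq_inv_mul, Finset.sum_mul, mul_assoc] using
      inner_hess_const_mul_sum_le hf hfK (c := 1 / n) (by positivity) y v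
  have hev : ∀ k, 0 ≤ ev k ∧ ev k ≤ (∑ i ∈ Q, K i) / s := fun k =>
    eigenvalue_mem_Icc_of_subsample hSinj hQcard hQtop (b.norm_eq_one k)
      (fun i => ⟨hfpsd i x (b k), by simpa using hfK i x (b k)⟩) (heig k)
  obtain ⟨k₀, hk₀⟩ := hlam
  have hlam0 : 0 < lam := (hev k₀).1.trans_lt hk₀
  set M := max ((∑ i ∈ Q, K i) / s) lam
  have hμ : ∀ k, lam ≤ max (ev k) lam ∧ max (ev k) lam ≤ M :=
    fun k => ⟨le_max_right _ _, max_le_max (hev k).2 le_rfl⟩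
  set g := gradient F x
  have hdec : ⟪p, g⟫ ≤ -(‖g‖ ^ 2 / (2 * M)) :=
    inner_le_neg_norm_sq_div_of_eigen b hHhat hlam0 (le_max_right _ _) hμ
      (by rwa [max_comm] at hθ₁le) hp₁
  have hb : ∀ α : ℝ, 0 < α → F (x + α • p) ≤ F x + α * β * ⟪p, g⟫ →
      F (x + α • p) ≤ F x - α * β / (2 * M) * ‖g‖ ^ 2 := fun α hα harm => by
    have := mul_le_mul_of_nonneg_left hdec (by positivity : 0 ≤ α * β)
    rw [mul_neg, ← mul_div_assoc, mul_div_right_comm] at this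
    linarith
  refine ⟨fun α hα hαle => ?_, hb, fun γ xstar hγ hγH _ α hα harm => ?_⟩
  · exact armijo_of_le_div hFd hH (fun y => hHK y p) hlam0.le hθ₂1.le hβ1.le
      (mul_norm_sq_le_inner_apply_of_eigen b hHhat (fun k => (hμ k).1) p) hp₂ hα.le hαle
  · have hPL := two_mul_sub_le_norm_gradient_sq_s4 hFd hH hγ hγH x xstar
    have hrate := mul_le_mul_of_nonneg_left hPL (by positivity : 0 ≤ α * β / (2 * M))
    have hcoef : α * β / (2 * M) * (2 * γ * (F x - F xstar))
        = α * β * γ / M * (F x - F xstar) := by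
      field_simp
    linarith [hb α hα harm]

theorem stmt_4 {d n s : ℕ} (hn : 0 < n) (hs : 0 < s)
    (f : Fin n → EuclideanSpace ℝ (Fin d) → ℝ) (K : Fin n → ℝ)
    (F : EuclideanSpace ℝ (Fin d) → ℝ)
    (Kc Khats β θ₁ θ₂ lam : ℝ) (x p : EuclideanSpace ℝ (Fin d))
    (S : Fin s → Fin n)
    (b : OrthonormalBasis (Fin d) ℝ (EuclideanSpace ℝ (Fin d))) (ev : Fin d → ℝ)
    (Hhat : EuclideanSpace ℝ (Fin d) →L[ℝ] EuclideanSpace ℝ (Fin d))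
    -- each fᵢ is twice continuously differentiable, convex, with `∇²fᵢ ⪯ Kᵢ I`
    (hf : ∀ i, ContDiff ℝ 2 (f i))
    (hKpos : ∀ i, 0 < K i)
    (hfpsd : ∀ i y v, 0 ≤ ⟪(hess (f i) y) v, v⟫)
    (hfK : ∀ i y v, ⟪(hess (f i) y) v, v⟫ ≤ K i * ‖v‖ ^ 2)
    -- `F = (1/n) ∑ fᵢ`, so that `∇²F ⪯ K I` with `K = (1/n) ∑ Kᵢ`
    (hF : ∀ y, F y = (1 / n : ℝ) * ∑ i, f i y)
    (hKc : Kc = (∑ i, K i) / n)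
    -- `K̂_s` is the average of the `s` largest `Kᵢ`'s
    (hKhats : ∃ Q : Finset (Fin n), Q.card = s ∧
        (∀ i ∈ Q, ∀ j ∉ Q, K j ≤ K i) ∧ Khats = (∑ i ∈ Q, K i) / s)
    (hβ : 0 < β) (hβ1 : β < 1) (hθ₂0 : 0 < θ₂) (hθ₂1 : θ₂ < 1)
    -- the sample consists of distinct indices
    (hSinj : Function.Injective S)
    -- spectral decomposition of the sub-sampled Hessian `H = H(x)`:
    -- `b` is an orthonormal eigenbasis with eigenvalues `ev`
    (heig : ∀ i, ((s : ℝ)⁻¹ • ∑ j, hess (f (S j)) x) (b i) = ev i • b i)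
    -- `λ > λ_min(H)`
    (hlam : ∃ i, ev i < lam)
    -- `Ĥ = P(λ; H)`: the spectral regularization of `H`
    (hHhat : ∀ i, Hhat (b i) = max (ev i) lam • b i)
    -- `0 ≤ θ₁ ≤ (1/2)√(λ / max{λ, K̂_s})`
    (hθ₁0 : 0 ≤ θ₁) (hθ₁le : θ₁ ≤ (1 / 2) * Real.sqrt (lam / max lam Khats))
    -- inexactness conditions on the update direction `p`
    (hp₁ : ‖Hhat p + gradient F x‖ ≤ θ₁ * ‖gradient F x‖)
    (hp₂ : ⟪p, gradient F x⟫ ≤ -(1 - θ₂) * ⟪p, Hhat p⟫) :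
    -- (a) any `0 < α ≤ 2(1-θ₂)(1-β)λ/K` satisfies the Armijo condition
    (∀ α : ℝ, 0 < α → α ≤ 2 * (1 - θ₂) * (1 - β) * lam / Kc →
        F (x + α • p) ≤ F x + α * β * ⟪p, gradient F x⟫) ∧
    -- (b) any `α > 0` satisfying the Armijo condition yields the stated decrease
    (∀ α : ℝ, 0 < α → F (x + α • p) ≤ F x + α * β * ⟪p, gradient F x⟫ →
        F (x + α • p) ≤ F x - α * β / (2 * max Khats lam) * ‖gradient F x‖ ^ 2) ∧
    -- (c) if moreover `F` is `γ`-strongly convex with minimizer `xstar`, a linear rate holds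
    (∀ (γ : ℝ) (xstar : EuclideanSpace ℝ (Fin d)), 0 < γ →
        (∀ y v, γ * ‖v‖ ^ 2 ≤ ⟪(hess F y) v, v⟫) → (∀ y, F xstar ≤ F y) →
        ∀ α : ℝ, 0 < α → F (x + α • p) ≤ F x + α * β * ⟪p, gradient F x⟫ →
          F (x + α • p) - F xstar ≤
            (1 - α * β * γ / max Khats lam) * (F x - F xstar)) :=
  stmt_4_general f K F Kc Khats β θ₁ θ₂ lam x p S b ev Hhat hf hfpsd hfK hF hKc hKhats hβ hβ1 hθ₂1
    hSinj heig hlam hHhat hθ₁le hp₁ hp₂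
end

section
/- Fix x ∈ ℝ^p and suppose ‖∇f_i(x)‖ ≤ G(x) for all i = 1,…,n. Let 0 < ε < 1 and 0 < δ < 1. Let i_1, …, i_s be i.i.d. indices drawn uniformly at random from {1,…,n} (sampling with replacement), and set g(x) = (1/s)∑_{j=1}^{s} ∇f_{i_j}(x). If s ≥ (G(x)²/ε²)(1 + √(8 ln(1/δ)))², then with probability at least 1 − δ, ‖∇F(x) − g(x)‖ ≤ ε. -/
/-!
Centre the gradients at `m = ∇F(x)`: then `s (∇F(x) - g(x)) = -∑ⱼ (∇f_{iⱼ}(x) - m)`, and the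
norm `ψ(i₁, …, iₛ)` of this sum changes by at most `2G` when a single index changes. McDiarmid's
inequality on the cube `Fin s → Fin n` (average out one coordinate at a time and apply Hoeffding's
lemma to it) makes `ψ - 𝔼ψ` sub-Gaussian with variance proxy `s (2G)²`. The centred summands have
mean zero, so the cross terms of `𝔼ψ²` vanish and `𝔼ψ ≤ √(𝔼ψ²) ≤ √s G`. The sample-size condition
therefore leaves a margin `sε - 𝔼ψ ≥ √s G √(8 ln(1/δ))`, at which the Chernoff bound is `δ`.
-/

open Finset Real MeasureTheory ProbabilityTheory
open scoped BigOperators NNReal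

section Average

variable {α : Type*} [Fintype α]

lemma integral_uniformOn_univ [MeasurableSpace α] [MeasurableSingletonClass α]
    (f : α → ℝ) : ∫ a, f a ∂uniformOn (Set.univ : Set α) = 𝔼 a, f a := by
  rw [integral_fintype Integrable.of_finite, Fintype.expect_eq_sum_div_card, Finset.sum_div]
  refine Finset.sum_congr rfl fun a _ => ?_
  rw [measureReal_def, uniformOn_univ, Measure.count_singleton, smul_eq_mul]
  simp [div_eq_inv_mul]

lemma expect_exp_le_of_abs_le [Nonempty α] {w : α → ℝ} {c : ℝ} (hw₀ : 𝔼 a, w a = 0)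
    (hw : ∀ a, |w a| ≤ c) : 𝔼 a, exp (w a) ≤ exp (c ^ 2 / 2) := by
  let _ : MeasurableSpace α := ⊤
  have hc : 0 ≤ c := (abs_nonneg _).trans (hw (Classical.arbitrary α))
  have hoeffding := ProbabilityTheory.mgf_le_of_mem_Icc_of_integral_eq_zero
    (μ := uniformOn Set.univ) (X := w) (a := -c) (b := c) (t := 1)
    Measurable.of_discrete.aemeasurable (ae_of_all _ fun a => abs_le.1 (hw a))
    (by rwa [integral_uniformOn_univ]) one_pos
  rw [mgf, integral_uniformOn_univ] at hoeffding
  convert hoeffding using 2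
  · simp
  · rw [sub_neg_eq_add, ← two_mul, nnnorm_mul, Real.nnnorm_of_nonneg hc]
    simp

lemma expect_fin_succ_pi {M : Type*} [AddCommMonoid M] [Module ℚ≥0 M] {s : ℕ}
    (h : (Fin (s + 1) → α) → M) :
    𝔼 ι, h ι = 𝔼 κ : Fin s → α, 𝔼 a, h (Fin.cons a κ) := by
  rw [Fintype.expect_equiv (Fin.consEquiv fun _ => α).symm h (fun p => h (Fin.cons p.1 p.2))
    (fun ι => by simp [Fin.consEquiv]), ← Finset.univ_product_univ,
    Finset.expect_product' univ univ fun a κ => h (Fin.cons a κ), Finset.expect_comm]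

lemma sum_sub_expect_eq_zero {M : Type*} [AddCommGroup M] [Module ℚ≥0 M] (V : α → M) :
    ∑ a, (V a - 𝔼 b, V b) = 0 := by
  rw [sum_sub_distrib, ← Finset.card_smul_expect, sum_const, sub_self]

end Average

def BoundedDifferences {α : Type*} {s : ℕ} (c : ℝ) (ψ : (Fin s → α) → ℝ) : Prop :=
  ∀ ι j a, |ψ ι - ψ (Function.update ι j a)| ≤ c

namespace BoundedDifferences

variable {α : Type*} {s : ℕ} {c : ℝ}

lemma const_mul {ψ : (Fin s → α) → ℝ} (h : BoundedDifferences c ψ) (t : ℝ) :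
    BoundedDifferences (|t| * c) (fun ι => t * ψ ι) := fun ι j a => by
  rw [← mul_sub, abs_mul]
  exact mul_le_mul_of_nonneg_left (h ι j a) (abs_nonneg t)

variable [Fintype α] [Nonempty α]

lemma expect_cons {ψ : (Fin (s + 1) → α) → ℝ} (h : BoundedDifferences c ψ) :
    BoundedDifferences c (fun κ : Fin s → α => 𝔼 a, ψ (Fin.cons a κ)) := by
  intro κ j b
  rw [← Finset.expect_sub_distrib]
  refine (Finset.abs_expect_le _ _).trans (Finset.expect_le univ_nonempty fun a _ => ?_)
  rw [Fin.cons_update]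
  exact h _ _ _

lemma abs_sub_expect_cons_le {ψ : (Fin (s + 1) → α) → ℝ} (h : BoundedDifferences c ψ) (a : α)
    (κ : Fin s → α) : |ψ (Fin.cons a κ) - 𝔼 b, ψ (Fin.cons b κ)| ≤ c := by
  rw [← Finset.expect_const (univ_nonempty (α := α)) (ψ (Fin.cons a κ)),
    ← Finset.expect_sub_distrib]
  refine (Finset.abs_expect_le _ _).trans (Finset.expect_le univ_nonempty fun b _ => ?_)
  simpa only [Fin.update_cons_zero] using h (Fin.cons a κ) 0 b

lemma expect_exp_sub_expect_le {ψ : (Fin s → α) → ℝ} (h : BoundedDifferences c ψ) :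
    𝔼 ι, exp (ψ ι - 𝔼 κ, ψ κ) ≤ exp (s * c ^ 2 / 2) := by
  induction s with
  | zero => simp
  | succ s ih =>
    set g : (Fin s → α) → ℝ := fun κ => 𝔼 a, ψ (Fin.cons a κ)
    have hg : 𝔼 κ, g κ = 𝔼 ι, ψ ι := (expect_fin_succ_pi ψ).symm
    have hcentred (κ : Fin s → α) : 𝔼 a, (ψ (Fin.cons a κ) - g κ) = 0 := by
      rw [Finset.expect_sub_distrib, Finset.expect_const univ_nonempty, sub_self]
    calc 𝔼 ι, exp (ψ ι - 𝔼 κ, ψ κ)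
        = 𝔼 κ, exp (g κ - 𝔼 κ', g κ') * 𝔼 a, exp (ψ (Fin.cons a κ) - g κ) := by
          rw [expect_fin_succ_pi, hg]
          refine Finset.expect_congr rfl fun κ _ => ?_
          rw [Finset.mul_expect]
          refine Finset.expect_congr rfl fun a _ => ?_
          rw [← exp_add]
          ring_nf
      _ ≤ 𝔼 κ, exp (g κ - 𝔼 κ', g κ') * exp (c ^ 2 / 2) :=
          Finset.expect_le_expect fun κ _ => mul_le_mul_of_nonneg_left
            (expect_exp_le_of_abs_le (hcentred κ) (h.abs_sub_expect_cons_le · κ)) (exp_pos _).le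
      _ ≤ exp (s * c ^ 2 / 2) * exp (c ^ 2 / 2) := by
          rw [← Finset.expect_mul]
          exact mul_le_mul_of_nonneg_right (ih h.expect_cons) (exp_pos _).le
      _ = exp ((s + 1 : ℕ) * c ^ 2 / 2) := by
          rw [← exp_add]
          push_cast
          ring_nf

lemma hasSubgaussianMGF [MeasurableSpace α] [MeasurableSingletonClass α] {c : ℝ≥0}
    {ψ : (Fin s → α) → ℝ} (h : BoundedDifferences c ψ) :
    HasSubgaussianMGF (fun ι => ψ ι - 𝔼 κ, ψ κ) (s * c ^ 2) (uniformOn Set.univ) where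
  integrable_exp_mul _ := Integrable.of_finite
  mgf_le t := by
    have := (h.const_mul t).expect_exp_sub_expect_le
    rw [← Finset.mul_expect] at this
    rw [mgf, integral_uniformOn_univ]
    convert this using 2
    · simp only [mul_sub]
    · push_cast
      rw [mul_pow, sq_abs]
      ring

end BoundedDifferences

/-- Unlike `HasSubgaussianMGF.measure_ge_le`, this stays informative for `c = 0`: it is the
Chernoff bound at the parameter `2 L / t` rather than at the optimal `t / c`. -/
lemma ProbabilityTheory.HasSubgaussianMGF.measureReal_ge_le_exp_neg {Ω : Type*}
    [MeasurableSpace Ω] {μ : Measure Ω} [IsFiniteMeasure μ] {X : Ω → ℝ} {c : ℝ≥0} {t L : ℝ}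
    (h : HasSubgaussianMGF X c μ) (ht : 0 < t) (hL : 0 ≤ L) (hct : 2 * c * L ≤ t ^ 2) :
    μ.real {ω | t ≤ X ω} ≤ exp (-L) := by
  set r := 2 * L / t
  calc μ.real {ω | t ≤ X ω}
      ≤ exp (-r * t) * mgf X μ r :=
        measure_ge_le_exp_mul_mgf t (by positivity) (h.integrable_exp_mul r)
    _ ≤ exp (-r * t) * exp (c * r ^ 2 / 2) := by gcongr; exact h.mgf_le r
    _ ≤ exp (-L) := by
        rw [← exp_add, exp_le_exp]
        have hr : c * r ^ 2 / 2 = L * (2 * c * L) / t ^ 2 := by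
          simp only [r]
          field_simp
        have hrt : -r * t = -(2 * L) := by simp only [r]; field_simp
        have : L * (2 * c * L) / t ^ 2 ≤ L := by
          rw [div_le_iff₀ (by positivity)]
          exact mul_le_mul_of_nonneg_left hct hL
        linarith

lemma ofReal_one_sub_le_measure {Ω : Type*} [MeasurableSpace Ω] {μ : Measure Ω}
    [IsProbabilityMeasure μ] {S B : Set Ω} {δ : ℝ} (hSB : Sᶜ ⊆ B) (hB : μ.real B ≤ δ) :
    ENNReal.ofReal (1 - δ) ≤ μ S := by
  rw [← ofReal_measureReal]
  refine ENNReal.ofReal_le_ofReal ?_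
  have h := measureReal_union_le (μ := μ) S Sᶜ
  rw [Set.union_compl_self, probReal_univ] at h
  linarith [measureReal_mono (μ := μ) hSB]

section SampleMean

lemma boundedDifferences_norm_sum {α E : Type*} [SeminormedAddCommGroup E] {s : ℕ} {W : α → E}
    {c : ℝ} (hW : ∀ a b, ‖W a - W b‖ ≤ c) :
    BoundedDifferences c (fun ι : Fin s → α => ‖∑ j, W (ι j)‖) := by
  intro ι j a
  have hsum : ∑ k, W (ι k) - ∑ k, W (Function.update ι j a k) = W (ι j) - W a := by
    rw [← sum_sub_distrib, Finset.sum_eq_single j (fun k _ hk => by simp [hk]) (by simp)]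
    simp
  exact (abs_norm_sub_norm_le _ _).trans (hsum ▸ hW _ _)

lemma norm_sub_inv_smul_sum {E : Type*} [NormedAddCommGroup E] [NormedSpace ℝ E] {s : ℕ}
    (hs : s ≠ 0) (m : E) (v : Fin s → E) :
    ‖m - (s : ℝ)⁻¹ • ∑ j, v j‖ = (s : ℝ)⁻¹ * ‖∑ j, (v j - m)‖ := by
  have h : m - (s : ℝ)⁻¹ • ∑ j, v j = -((s : ℝ)⁻¹ • ∑ j, (v j - m)) := by
    rw [sum_sub_distrib, sum_const, card_univ, Fintype.card_fin, ← Nat.cast_smul_eq_nsmul ℝ,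
      smul_sub, inv_smul_smul₀ (Nat.cast_ne_zero.2 hs)]
    abel
  rw [h, norm_neg, norm_smul, norm_inv, Real.norm_natCast]

variable {α E : Type*} [Fintype α] [Nonempty α] [NormedAddCommGroup E] [InnerProductSpace ℝ E]

lemma expect_norm_add_sq_of_sum_eq_zero {W : α → E} (hW : ∑ a, W a = 0) (v : E) :
    𝔼 a, ‖W a + v‖ ^ 2 = 𝔼 a, ‖W a‖ ^ 2 + ‖v‖ ^ 2 := by
  have hinner : 𝔼 a, inner ℝ (W a) v = 0 := by
    rw [Fintype.expect_eq_sum_div_card, ← sum_inner, hW, inner_zero_left, zero_div]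
  simp only [norm_add_sq_real]
  rw [Finset.expect_add_distrib, Finset.expect_add_distrib, ← Finset.mul_expect, hinner,
    Finset.expect_const univ_nonempty]
  ring

lemma expect_norm_sum_sq_of_sum_eq_zero {W : α → E} (hW : ∑ a, W a = 0) (s : ℕ) :
    𝔼 ι : Fin s → α, ‖∑ j, W (ι j)‖ ^ 2 = s * 𝔼 a, ‖W a‖ ^ 2 := by
  induction s with
  | zero => simp
  | succ s ih =>
    rw [expect_fin_succ_pi]
    simp only [Fin.sum_univ_succ, Fin.cons_zero, Fin.cons_succ,
      expect_norm_add_sq_of_sum_eq_zero hW]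
    rw [Finset.expect_add_distrib, Finset.expect_const univ_nonempty, ih]
    push_cast
    ring

lemma expect_norm_sum_le_of_sum_eq_zero {W : α → E} (hW : ∑ a, W a = 0) (s : ℕ) :
    𝔼 ι : Fin s → α, ‖∑ j, W (ι j)‖ ≤ √(s * 𝔼 a, ‖W a‖ ^ 2) := by
  rw [← expect_norm_sum_sq_of_sum_eq_zero hW]
  apply Real.le_sqrt_of_sq_le
  simpa using Finset.expect_mul_sq_le_sq_mul_sq univ (fun ι : Fin s → α => ‖∑ j, W (ι j)‖)
    fun _ => 1

variable [Module ℚ≥0 E]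

lemma expect_norm_sub_expect_sq_le (V : α → E) :
    𝔼 a, ‖V a - 𝔼 b, V b‖ ^ 2 ≤ 𝔼 a, ‖V a‖ ^ 2 := by
  have h := expect_norm_add_sq_of_sum_eq_zero (sum_sub_expect_eq_zero V) (𝔼 b, V b)
  simp only [sub_add_cancel] at h
  rw [h]
  exact le_add_of_nonneg_right (sq_nonneg _)

lemma expect_norm_sum_sub_expect_le {V : α → E} {G : ℝ} (hV : ∀ a, ‖V a‖ ≤ G) (s : ℕ) :
    𝔼 ι : Fin s → α, ‖∑ j, (V (ι j) - 𝔼 a, V a)‖ ≤ √s * G := by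
  have hG : 0 ≤ G := (norm_nonneg _).trans (hV (Classical.arbitrary α))
  calc _ ≤ √(s * 𝔼 a, ‖V a - 𝔼 b, V b‖ ^ 2) :=
        expect_norm_sum_le_of_sum_eq_zero (sum_sub_expect_eq_zero V) s
    _ ≤ √(s * G ^ 2) := by
        gcongr
        exact (expect_norm_sub_expect_sq_le V).trans
          (Finset.expect_le univ_nonempty fun a _ => pow_le_pow_left₀ (norm_nonneg _) (hV a) 2)
    _ = √s * G := by rw [Real.sqrt_mul (Nat.cast_nonneg _), Real.sqrt_sq hG]

end SampleMean

lemma hasGradientAt_const_mul_sum {E ι : Type*} [NormedAddCommGroup E] [InnerProductSpace ℝ E]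
    [CompleteSpace E] (u : Finset ι) {f : ι → E → ℝ} {x : E}
    (hf : ∀ i ∈ u, DifferentiableAt ℝ (f i) x) (c : ℝ) :
    HasGradientAt (fun y => c * ∑ i ∈ u, f i y) (c • ∑ i ∈ u, gradient (f i) x) x := by
  rw [hasGradientAt_iff_hasFDerivAt, map_smul, map_sum]
  exact (HasFDerivAt.fun_sum fun i hi =>
    hasGradientAt_iff_hasFDerivAt.1 (hf i hi).hasGradientAt).const_mul c

lemma gradient_eq_expect_of_eq_average {ι : Type*} [Fintype ι] {n : ℕ}
    {f : Fin n → EuclideanSpace ℝ ι → ℝ} {F : EuclideanSpace ℝ ι → ℝ} {x : EuclideanSpace ℝ ι}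
    (hF : ∀ y, F y = (1 / n : ℝ) * ∑ i, f i y) (hf : ∀ i, DifferentiableAt ℝ (f i) x) :
    gradient F x = 𝔼 i, gradient (f i) x := by
  rw [show F = _ from funext hF,
    (hasGradientAt_const_mul_sum univ (fun i _ => hf i) _).gradient, Finset.expect,
    ← NNRat.cast_smul_eq_nnqsmul ℝ]
  simp

lemma sub_pos_and_le_sq_of_sampleSize {s G ε L a : ℝ} (hs : 0 < s) (hG : 0 ≤ G) (hε : 0 < ε)
    (hL : 0 < L) (ha : a ≤ √s * G) (hsize : G ^ 2 / ε ^ 2 * (1 + √(8 * L)) ^ 2 ≤ s) :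
    0 < s * ε - a ∧ 2 * (s * (2 * G) ^ 2) * L ≤ (s * ε - a) ^ 2 := by
  set R := √(8 * L)
  have hR : 0 < R := Real.sqrt_pos.2 (by positivity)
  have hR2 : R ^ 2 = 8 * L := Real.sq_sqrt (by positivity)
  have hss : √s ^ 2 = s := Real.sq_sqrt hs.le
  have hs' : 0 < √s := Real.sqrt_pos.2 hs
  have hGR : G * (1 + R) ≤ √s * ε := by
    refine (pow_le_pow_iff_left₀ (by positivity) (by positivity) two_ne_zero).1 ?_
    rw [div_mul_eq_mul_div, div_le_iff₀ (by positivity)] at hsize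
    rw [mul_pow, mul_pow, hss]
    exact hsize
  have hsε : s * ε = √s * (√s * ε) := by rw [← mul_assoc, Real.mul_self_sqrt hs.le]
  have hmargin : √s * G * R ≤ s * ε - a := by
    nlinarith [mul_le_mul_of_nonneg_left hGR hs'.le]
  have hgap : G < √s * ε := by nlinarith [mul_pos hR (mul_pos hs' hε)]
  refine ⟨by nlinarith [mul_pos hs' (sub_pos.2 hgap)], ?_⟩
  calc 2 * (s * (2 * G) ^ 2) * L = (√s * G * R) ^ 2 := by
        rw [show (√s * G * R) ^ 2 = √s ^ 2 * G ^ 2 * R ^ 2 by ring, hss, hR2]; ring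
    _ ≤ (s * ε - a) ^ 2 := pow_le_pow_left₀ (by positivity) hmargin 2

theorem stmt_8_general {d n s : ℕ} (hn : 0 < n) (hs : 0 < s)
    {Ω : Type*} [MeasurableSpace Ω] (μ : Measure Ω) [IsProbabilityMeasure μ]
    (f : Fin n → EuclideanSpace ℝ (Fin d) → ℝ)
    (F : EuclideanSpace ℝ (Fin d) → ℝ)
    (G ε δ : ℝ) (x : EuclideanSpace ℝ (Fin d))
    (I : Ω → (Fin s → Fin n)) (hI : Measurable I)
    -- each fᵢ is continuously differentiable
    (hf : ∀ i, ContDiff ℝ 1 (f i))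
    -- `F = (1/n) ∑ fᵢ`
    (hF : ∀ y, F y = (1 / n : ℝ) * ∑ i, f i y)
    -- `‖∇fᵢ(x)‖ ≤ G(x)` for all `i`
    (hG : ∀ i, ‖gradient (f i) x‖ ≤ G)
    (hε : 0 < ε) (hδ : 0 < δ) (hδ1 : δ < 1)
    -- the indices `i_1, …, i_s` are i.i.d. uniform over `{1,…,n}`
    (hlaw : Measure.map I μ = uniformOn (Set.univ : Set (Fin s → Fin n)))
    -- sample-size requirement `s ≥ (G(x)²/ε²)(1 + √(8 ln(1/δ)))²`
    (hsize : (s : ℝ) ≥ G ^ 2 / ε ^ 2 * (1 + Real.sqrt (8 * Real.log (1 / δ))) ^ 2) :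
    -- with probability at least `1 - δ`, `‖∇F(x) - g(x)‖ ≤ ε`
    ENNReal.ofReal (1 - δ) ≤
      μ {ω | ‖gradient F x - (s : ℝ)⁻¹ • ∑ j, gradient (f (I ω j)) x‖ ≤ ε} := by
  have : Nonempty (Fin n) := ⟨⟨0, hn⟩⟩
  have hsR : (0 : ℝ) < s := Nat.cast_pos.2 hs
  lift G to ℝ≥0 using (norm_nonneg _).trans (hG ⟨0, hn⟩)
  set V := fun i => gradient (f i) x
  set ψ : (Fin s → Fin n) → ℝ := fun ι => ‖∑ j, (V (ι j) - 𝔼 i, V i)‖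
  have hgradF : gradient F x = 𝔼 i, V i :=
    gradient_eq_expect_of_eq_average hF fun i => (hf i).differentiable one_ne_zero x
  have hdiff : BoundedDifferences ((2 * G : ℝ≥0) : ℝ) ψ := by
    refine boundedDifferences_norm_sum (W := fun i => V i - 𝔼 i, V i) fun i k => ?_
    rw [sub_sub_sub_cancel_right, NNReal.coe_mul, NNReal.coe_ofNat]
    linarith [norm_sub_le (V i) (V k), hG i, hG k]
  have hsub : HasSubgaussianMGF (fun ω => ψ (I ω) - 𝔼 ι, ψ ι) (s * (2 * G) ^ 2) μ :=
    .of_map (X := fun ι => ψ ι - 𝔼 κ, ψ κ) hI.aemeasurable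
      (by rw [hlaw]; exact hdiff.hasSubgaussianMGF)
  have hL : 0 < log (1 / δ) := log_pos ((one_lt_div hδ).2 hδ1)
  obtain ⟨ht, hct⟩ := sub_pos_and_le_sq_of_sampleSize hsR G.2 hε hL
    (expect_norm_sum_sub_expect_le hG s) hsize
  refine ofReal_one_sub_le_measure (fun ω hω => ?_)
    ((hsub.measureReal_ge_le_exp_neg ht hL.le (by exact_mod_cast hct)).trans_eq ?_)
  · simp only [Set.mem_compl_iff, Set.mem_ofPred_eq, hgradF, norm_sub_inv_smul_sum hs.ne',
      not_le, lt_inv_mul_iff₀ hsR] at hω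
    exact sub_le_sub_right hω.le _
  · rw [exp_neg, exp_log (by positivity), one_div, inv_inv]

theorem stmt_8 {d n s : ℕ} (hn : 0 < n) (hs : 0 < s)
    {Ω : Type*} [MeasurableSpace Ω] (μ : Measure Ω) [IsProbabilityMeasure μ]
    (f : Fin n → EuclideanSpace ℝ (Fin d) → ℝ)
    (F : EuclideanSpace ℝ (Fin d) → ℝ)
    (G ε δ : ℝ) (x : EuclideanSpace ℝ (Fin d))
    (I : Ω → (Fin s → Fin n)) (hI : Measurable I)
    -- each fᵢ is continuously differentiable
    (hf : ∀ i, ContDiff ℝ 1 (f i))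
    -- `F = (1/n) ∑ fᵢ`
    (hF : ∀ y, F y = (1 / n : ℝ) * ∑ i, f i y)
    -- `‖∇fᵢ(x)‖ ≤ G(x)` for all `i`
    (hG : ∀ i, ‖gradient (f i) x‖ ≤ G)
    (hε : 0 < ε) (hε1 : ε < 1) (hδ : 0 < δ) (hδ1 : δ < 1)
    -- the indices `i_1, …, i_s` are i.i.d. uniform over `{1,…,n}`
    (hlaw : Measure.map I μ = uniformOn (Set.univ : Set (Fin s → Fin n)))
    -- sample-size requirement `s ≥ (G(x)²/ε²)(1 + √(8 ln(1/δ)))²`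
    (hsize : (s : ℝ) ≥ G ^ 2 / ε ^ 2 * (1 + Real.sqrt (8 * Real.log (1 / δ))) ^ 2) :
    -- with probability at least `1 - δ`, `‖∇F(x) - g(x)‖ ≤ ε`
    ENNReal.ofReal (1 - δ) ≤
      μ {ω | ‖gradient F x - (s : ℝ)⁻¹ • ∑ j, gradient (f (I ω j)) x‖ ≤ ε} :=
  stmt_8_general hn hs μ f F G ε δ x I hI hf hF hG hε hδ hδ1 hlaw hsize
end
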